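/- arXiv:0912.4872 — 4 statements merged into one kernel-verified Lean document; each statement's English description precedes it below -/
import Mathlib

section
/- Conservation law for directed information (Massey–Massey): for any jointly distributed finitely valued random vectors X^n and Y^n, I(X^n; Y^n) = I(X^n → Y^n) + I(Y^{n-1} → X^n), where I(Y^{n-1} → X^n) := Σ_{i=2}^n I(Y^{i-1}; X_i | X^{i-1}). -/
open scoped Classical
open Real

noncomputable section

variable {α β : Type} [Fintype α] [DecidableEq α] [Fintype β] [DecidableEq β]

/-- Probability of the event `E` under the joint pmf `p` of `(X^n, Y^n)`. -/
def pr {n : ℕ} (p : (Fin n → α) → (Fin n → β) → ℝ)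
    (E : (Fin n → α) → (Fin n → β) → Prop) : ℝ :=
  ∑ x, ∑ y, if E x y then p x y else 0

/-- `p` is a probability mass function on pairs of sequences. -/
def IsPmf {n : ℕ} (p : (Fin n → α) → (Fin n → β) → ℝ) : Prop :=
  (∀ x y, 0 ≤ p x y) ∧ ∑ x, ∑ y, p x y = 1

/-- The conditional pmf `p(x_i | x^{i-1}, y^{i-d})` evaluated along `(x, y)`. -/
def condX {n : ℕ} (p : (Fin n → α) → (Fin n → β) → ℝ) (d : ℕ) (i : Fin n)
    (x : Fin n → α) (y : Fin n → β) : ℝ :=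
  pr p (fun x' y' => (∀ j, j < i → x' j = x j) ∧ x' i = x i ∧
      ∀ j : Fin n, (j : ℕ) + d ≤ (i : ℕ) → y' j = y j) /
  pr p (fun x' y' => (∀ j, j < i → x' j = x j) ∧
      ∀ j : Fin n, (j : ℕ) + d ≤ (i : ℕ) → y' j = y j)

/-- The conditional pmf `p(y_i | y^{i-1}, x^{i-d})` evaluated along `(x, y)`. -/
def condY {n : ℕ} (p : (Fin n → α) → (Fin n → β) → ℝ) (d : ℕ) (i : Fin n)
    (x : Fin n → α) (y : Fin n → β) : ℝ :=
  pr p (fun x' y' => (∀ j, j < i → y' j = y j) ∧ y' i = y i ∧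
      ∀ j : Fin n, (j : ℕ) + d ≤ (i : ℕ) → x' j = x j) /
  pr p (fun x' y' => (∀ j, j < i → y' j = y j) ∧
      ∀ j : Fin n, (j : ℕ) + d ≤ (i : ℕ) → x' j = x j)

/-- Causally conditioned pmf `p(x^n || y^{n-d}) = ∏ᵢ p(xᵢ | x^{i-1}, y^{i-d})`. -/
def ccX {n : ℕ} (p : (Fin n → α) → (Fin n → β) → ℝ) (d : ℕ)
    (x : Fin n → α) (y : Fin n → β) : ℝ :=
  ∏ i, condX p d i x y

/-- Causally conditioned pmf `p(y^n || x^{n-d}) = ∏ᵢ p(yᵢ | y^{i-1}, x^{i-d})`. -/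
def ccY {n : ℕ} (p : (Fin n → α) → (Fin n → β) → ℝ) (d : ℕ)
    (x : Fin n → α) (y : Fin n → β) : ℝ :=
  ∏ i, condY p d i x y

/-- Marginal pmf of `X^n`. -/
def pX {n : ℕ} (p : (Fin n → α) → (Fin n → β) → ℝ) (x : Fin n → α) : ℝ := ∑ y, p x y

/-- Marginal pmf of `Y^n`. -/
def pY {n : ℕ} (p : (Fin n → α) → (Fin n → β) → ℝ) (y : Fin n → β) : ℝ := ∑ x, p x y

/-- `H(X^n)` in bits. -/
def HX {n : ℕ} (p : (Fin n → α) → (Fin n → β) → ℝ) : ℝ :=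
  -(∑ x, ∑ y, p x y * Real.logb 2 (pX p x))

/-- `H(Y^n)` in bits. -/
def HY {n : ℕ} (p : (Fin n → α) → (Fin n → β) → ℝ) : ℝ :=
  -(∑ x, ∑ y, p x y * Real.logb 2 (pY p y))

/-- Joint entropy `H(X^n, Y^n)` in bits. -/
def Hjoint {n : ℕ} (p : (Fin n → α) → (Fin n → β) → ℝ) : ℝ :=
  -(∑ x, ∑ y, p x y * Real.logb 2 (p x y))

/-- Conditional entropy `H(X_i | X^{i-1}, Y^{i-d})` in bits. -/
def HcondX {n : ℕ} (p : (Fin n → α) → (Fin n → β) → ℝ) (d : ℕ) (i : Fin n) : ℝ :=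
  -(∑ x, ∑ y, p x y * Real.logb 2 (condX p d i x y))

/-- Conditional entropy `H(Y_i | Y^{i-1}, X^{i-d})` in bits. -/
def HcondY {n : ℕ} (p : (Fin n → α) → (Fin n → β) → ℝ) (d : ℕ) (i : Fin n) : ℝ :=
  -(∑ x, ∑ y, p x y * Real.logb 2 (condY p d i x y))

/-- Causally conditional entropy `H(X^n || Y^{n-d}) = Σᵢ H(Xᵢ | X^{i-1}, Y^{i-d})`. -/
def HccX {n : ℕ} (p : (Fin n → α) → (Fin n → β) → ℝ) (d : ℕ) : ℝ := ∑ i, HcondX p d i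

/-- Causally conditional entropy `H(Y^n || X^{n-d})`. -/
def HccY {n : ℕ} (p : (Fin n → α) → (Fin n → β) → ℝ) (d : ℕ) : ℝ := ∑ i, HcondY p d i

/-- Conditional mutual information `I(Y^i; X_i | X^{i-1})`
(as the expectation of `log (p(xᵢ|x^{i-1},y^i) / p(xᵢ|x^{i-1}))`;
note `condX p n` is `p(xᵢ|x^{i-1})`, conditioning on no `y`'s at all). -/
def cmiYX {n : ℕ} (p : (Fin n → α) → (Fin n → β) → ℝ) (i : Fin n) : ℝ :=
  ∑ x, ∑ y, p x y * Real.logb 2 (condX p 0 i x y / condX p n i x y)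

/-- Conditional mutual information `I(X^i; Y_i | Y^{i-1})`. -/
def cmiXY {n : ℕ} (p : (Fin n → α) → (Fin n → β) → ℝ) (i : Fin n) : ℝ :=
  ∑ x, ∑ y, p x y * Real.logb 2 (condY p 0 i x y / condY p n i x y)

/-- Directed information `I(Y^n → X^n) = Σᵢ I(Y^i; X_i | X^{i-1})`. -/
def dirYX {n : ℕ} (p : (Fin n → α) → (Fin n → β) → ℝ) : ℝ := ∑ i, cmiYX p i

/-- Directed information `I(X^n → Y^n) = Σᵢ I(X^i; Y_i | Y^{i-1})`. -/
def dirXY {n : ℕ} (p : (Fin n → α) → (Fin n → β) → ℝ) : ℝ := ∑ i, cmiXY p i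

/-- Directed information `I(Y^{n-1} → X^n) = Σᵢ I(Y^{i-1}; X_i | X^{i-1})`
(the term for `i = 1` vanishes, so we may sum over all `i`). -/
def dirY1X {n : ℕ} (p : (Fin n → α) → (Fin n → β) → ℝ) : ℝ :=
  ∑ i, ∑ x, ∑ y, p x y * Real.logb 2 (condX p 1 i x y / condX p n i x y)

/-- Mutual information `I(X^n; Y^n)` in bits. -/
def miXY {n : ℕ} (p : (Fin n → α) → (Fin n → β) → ℝ) : ℝ :=
  ∑ x, ∑ y, p x y * Real.logb 2 (p x y / (pX p x * pY p y))

/-! The chain rule, applied along the interleaved order `X₁, Y₁, X₂, Y₂, …`, writes the pointwise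
mutual information `log p(x^i, y^i) / (p(x^i) p(y^i))` of the length-`i` prefixes as a telescoping
sum whose `i`-th increment is exactly the `i`-th summand of `I(X^n → Y^n) + I(Y^{n-1} → X^n)`.
Taking expectations gives the conservation law. -/

section ConservationLaw

omit [DecidableEq α] [DecidableEq β]

variable {n : ℕ} {γ : Type}

lemma pr_congr (p : (Fin n → α) → (Fin n → β) → ℝ)
    {E F : (Fin n → α) → (Fin n → β) → Prop} (h : ∀ x y, E x y ↔ F x y) :
    pr p E = pr p F :=
  Finset.sum_congr rfl fun x _ => Finset.sum_congr rfl fun y _ => if_congr (h x y) rfl rfl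

lemma le_pr {p : (Fin n → α) → (Fin n → β) → ℝ} (hnn : ∀ x y, 0 ≤ p x y)
    {E : (Fin n → α) → (Fin n → β) → Prop} {x : Fin n → α} {y : Fin n → β} (h : E x y) :
    p x y ≤ pr p E := by
  have hterm x' y' : 0 ≤ if E x' y' then p x' y' else 0 := ite_nonneg (hnn x' y') le_rfl
  calc p x y = if E x y then p x y else 0 := (if_pos h).symm
    _ ≤ ∑ y', if E x y' then p x y' else 0 :=
      Finset.single_le_sum (fun y' _ => hterm x y') (Finset.mem_univ y)
    _ ≤ pr p E :=
      Finset.single_le_sum (fun x' _ => Finset.sum_nonneg fun y' _ => hterm x' y')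
        (Finset.mem_univ x)

lemma Fin.forall_lt_iff_forall_val_lt (i : Fin n) (u v : Fin n → γ) :
    (∀ j, j < i → u j = v j) ↔ ∀ j : Fin n, (j : ℕ) < i → u j = v j :=
  forall_congr' fun _ => imp_congr_left Fin.lt_def

lemma Fin.forall_lt_and_eq_iff (i : Fin n) (u v : Fin n → γ) :
    ((∀ j, j < i → u j = v j) ∧ u i = v i) ↔ ∀ j : Fin n, (j : ℕ) < i + 1 → u j = v j := by
  constructor
  · rintro ⟨hlt, heq⟩ j hj
    rcases Nat.lt_succ_iff_lt_or_eq.mp hj with hj | hj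
    · exact hlt j (Fin.lt_def.mpr hj)
    · rwa [Fin.ext hj]
  · intro h
    exact ⟨fun j hj => h j (Nat.lt_succ_of_lt (Fin.lt_def.mp hj)), h i (Nat.lt_succ_self _)⟩

lemma Fin.forall_add_le_iff (i : ℕ) (d : ℕ) (u v : Fin n → γ) :
    (∀ j : Fin n, (j : ℕ) + d ≤ i → u j = v j) ↔ ∀ j : Fin n, (j : ℕ) < i + 1 - d → u j = v j :=
  forall_congr' fun _ => imp_congr_left (by omega)

/-- The joint probability `p(x^a, y^b)` of the prefixes of `x` and `y`. -/
def prefixProb (p : (Fin n → α) → (Fin n → β) → ℝ) (x : Fin n → α) (y : Fin n → β)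
    (a b : ℕ) : ℝ :=
  pr p fun x' y' => (∀ j : Fin n, (j : ℕ) < a → x' j = x j) ∧ ∀ j : Fin n, (j : ℕ) < b → y' j = y j

section PrefixProb

variable (p : (Fin n → α) → (Fin n → β) → ℝ) (x : Fin n → α) (y : Fin n → β)

lemma prefixProb_zero_zero (hsum : ∑ x, ∑ y, p x y = 1) : prefixProb p x y 0 0 = 1 := by
  simp [prefixProb, pr, hsum]

lemma prefixProb_full_full : prefixProb p x y n n = p x y := by
  simp [prefixProb, pr, ← funext_iff, ite_and, Finset.sum_ite_eq']

lemma prefixProb_full_zero : prefixProb p x y n 0 = pX p x := by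
  simp [prefixProb, pr, pX, ← funext_iff, Finset.sum_ite_eq']

lemma prefixProb_zero_full : prefixProb p x y 0 n = pY p y := by
  simp [prefixProb, pr, pY, ← funext_iff, Finset.sum_ite_eq']

lemma le_prefixProb (hnn : ∀ x y, 0 ≤ p x y) (a b : ℕ) : p x y ≤ prefixProb p x y a b :=
  le_pr hnn ⟨fun _ _ => rfl, fun _ _ => rfl⟩

/- The truncated `i + 1 - d` is `0` when `d > i`: then `condX p d i` conditions on no `y`'s. -/
lemma condX_eq_div (d : ℕ) (i : Fin n) :
    condX p d i x y = prefixProb p x y (i + 1) (i + 1 - d) / prefixProb p x y i (i + 1 - d) := by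
  unfold condX prefixProb
  congr 1 <;> refine pr_congr p fun x' y' => ?_
  · rw [← and_assoc, Fin.forall_lt_and_eq_iff, Fin.forall_add_le_iff]
  · rw [Fin.forall_lt_iff_forall_val_lt, Fin.forall_add_le_iff]

lemma condY_eq_div (d : ℕ) (i : Fin n) :
    condY p d i x y = prefixProb p x y (i + 1 - d) (i + 1) / prefixProb p x y (i + 1 - d) i := by
  unfold condY prefixProb
  congr 1 <;> refine pr_congr p fun x' y' => ?_
  · rw [← and_assoc, Fin.forall_lt_and_eq_iff, Fin.forall_add_le_iff, and_comm]
  · rw [Fin.forall_lt_iff_forall_val_lt, Fin.forall_add_le_iff, and_comm]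

def prefixPMI (k : ℕ) : ℝ :=
  logb 2 (prefixProb p x y k k / (prefixProb p x y k 0 * prefixProb p x y 0 k))

lemma logb_condY_div_add_logb_condX_div (hne : ∀ a b, prefixProb p x y a b ≠ 0) (i : Fin n) :
    logb 2 (condY p 0 i x y / condY p n i x y) + logb 2 (condX p 1 i x y / condX p n i x y) =
      prefixPMI p x y (i + 1) - prefixPMI p x y i := by
  have hn : (i : ℕ) + 1 - n = 0 := by omega
  simp only [condX_eq_div, condY_eq_div, prefixPMI, hn, Nat.sub_zero, Nat.add_sub_cancel,
    logb_div, logb_mul, hne, ne_eq, not_false_eq_true, div_ne_zero, mul_ne_zero]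
  ring

lemma sum_logb_condY_div_add_logb_condX_div (hne : ∀ a b, prefixProb p x y a b ≠ 0) :
    ∑ i : Fin n, (logb 2 (condY p 0 i x y / condY p n i x y) +
        logb 2 (condX p 1 i x y / condX p n i x y)) =
      prefixPMI p x y n - prefixPMI p x y 0 := by
  simp only [logb_condY_div_add_logb_condX_div p x y hne]
  rw [Fin.sum_univ_eq_sum_range (fun i => prefixPMI p x y (i + 1) - prefixPMI p x y i),
    Finset.sum_range_sub]

end PrefixProb

lemma mul_logb_pmi_eq_sum {p : (Fin n → α) → (Fin n → β) → ℝ} (hp : IsPmf p)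
    (x : Fin n → α) (y : Fin n → β) :
    p x y * logb 2 (p x y / (pX p x * pY p y)) =
      ∑ i : Fin n, (p x y * logb 2 (condY p 0 i x y / condY p n i x y) +
        p x y * logb 2 (condX p 1 i x y / condX p n i x y)) := by
  simp only [← mul_add, ← Finset.mul_sum]
  rcases (hp.1 x y).eq_or_lt with hzero | hpos
  · rw [← hzero, zero_mul, zero_mul]
  have hne a b : prefixProb p x y a b ≠ 0 :=
    (hpos.trans_le (le_prefixProb p x y hp.1 a b)).ne'
  rw [sum_logb_condY_div_add_logb_condX_div p x y hne, prefixPMI, prefixPMI, prefixProb_full_full,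
    prefixProb_full_zero, prefixProb_zero_full, prefixProb_zero_zero p x y hp.2]
  norm_num

end ConservationLaw

/-- conservation law for directed information (Massey–Massey),
`I(X^n; Y^n) = I(X^n → Y^n) + I(Y^{n-1} → X^n)`. -/
theorem conservation_law {n : ℕ}
    (p : (Fin n → α) → (Fin n → β) → ℝ) (hp : IsPmf p) :
    miXY p = dirXY p + dirY1X p := by
  simp only [miXY, mul_logb_pmi_eq_sum hp, dirXY, dirY1X, cmiXY, ← Finset.sum_add_distrib]
  exact (Finset.sum_congr rfl fun x _ => Finset.sum_comm).trans Finset.sum_comm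
end
end

section
/- For any causal betting strategy b, the expected log of the causally conditioned bet satisfies E[log b(X^n || Y^n)] ≤ −H(X^n || Y^n), with equality when b(x^n||y^n) = p(x^n||y^n). Consequently, the maximum expected log-wealth in a horse race with causal side information is W*(X^n||Y^n) = E[log o(X^n)] − H(X^n || Y^n), achieved by b(x_i|x^{i-1},y^i) = p(x_i|x^{i-1},y^i). -/
open scoped Classical
open Real

noncomputable section

variable {α β : Type} [Fintype α] [DecidableEq α] [Fintype β] [DecidableEq β]

/-- A causal gambling strategy: `b i x y` is the fraction of wealth bet on horse `x i`
given the history `(x^{i-1}, y^i)`; it is nonnegative, depends only on `(x^i, y^i)`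
(the bet-upon horse `x i` together with the causal history), and is normalized. -/
def IsCausalBet {n : ℕ} (b : Fin n → (Fin n → α) → (Fin n → β) → ℝ) : Prop :=
  (∀ i x y, 0 ≤ b i x y) ∧
  (∀ i x x' y y', (∀ j, j ≤ i → x j = x' j) → (∀ j, j ≤ i → y j = y' j) →
    b i x y = b i x' y') ∧
  (∀ i x y, ∑ a : α, b i (Function.update x i a) y = 1)

/-- `E[log b(X^n || Y^n)]` where `b(x^n||y^n) = ∏ᵢ b(xᵢ|x^{i-1},y^i)`. -/
def Elogb {n : ℕ} (p : (Fin n → α) → (Fin n → β) → ℝ)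
    (b : Fin n → (Fin n → α) → (Fin n → β) → ℝ) : ℝ :=
  ∑ x, ∑ y, p x y * Real.logb 2 (∏ i, b i x y)

/-- The growth `W(X^n||Y^n) = E[log S(X^n||Y^n)]`, where
`S(x^n||y^n) = ∏ᵢ b(xᵢ|x^{i-1},y^i) o(xᵢ|x^{i-1})`. -/
def growthW {n : ℕ} (p : (Fin n → α) → (Fin n → β) → ℝ)
    (o : Fin n → (Fin n → α) → ℝ)
    (b : Fin n → (Fin n → α) → (Fin n → β) → ℝ) : ℝ :=
  ∑ x, ∑ y, p x y * Real.logb 2 (∏ i, b i x y * o i x)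

/-- `E[log o(X^n)]` with `o(x^n) = ∏ᵢ o(xᵢ|x^{i-1})`. -/
def Elogo {n : ℕ} (p : (Fin n → α) → (Fin n → β) → ℝ)
    (o : Fin n → (Fin n → α) → ℝ) : ℝ :=
  ∑ x, ∑ y, p x y * Real.logb 2 (∏ i, o i x)

/-! Telescoping the prefix probabilities `p(x^k, y^k)` gives the chain rule for causal
conditioning, `p(x^n, y^n) = p(x^n||y^n) p(y^n||x^{n-1})`. For a causal bet `b`, the function
`b(x^n||y^n) p(y^n||x^{n-1})` is a product of causal sub-stochastic kernels, so summing out the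
coordinates from the last one backwards shows that its total mass is at most `1`. Gibbs'
inequality against it, after cancelling `E[log p(Y^n||X^{n-1})]` by the chain rule, is
`E[log b(X^n||Y^n)] ≤ E[log p(X^n||Y^n)] = -H(X^n||Y^n)`. The growth splits as
`E[log b(X^n||Y^n)] + E[log o(X^n)]`. -/

open Finset Function

theorem sum_mul_logb_le_sum_mul_logb_self {ι : Type*} [Fintype ι] {b : ℝ} (hb : 1 < b)
    {p q : ι → ℝ} (hp : ∀ i, 0 ≤ p i) (hp1 : ∑ i, p i = 1) (hq : ∀ i, 0 ≤ q i)
    (hq1 : ∑ i, q i ≤ 1) (hpq : ∀ i, 0 < p i → 0 < q i) :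
    ∑ i, p i * logb b (q i) ≤ ∑ i, p i * logb b (p i) := by
  have hlogb : 0 < log b := log_pos hb
  have key : ∀ i, p i * logb b (q i) ≤ p i * logb b (p i) + (q i - p i) / log b := by
    intro i
    rcases (hp i).eq_or_lt with h | h
    · rw [← h]
      simpa using div_nonneg (hq i) hlogb.le
    · have hlog := log_le_sub_one_of_pos (div_pos (hpq i h) h)
      rw [log_div (hpq i h).ne' h.ne'] at hlog
      have hpq' : p i * (q i / p i) = q i := mul_div_cancel₀ _ h.ne'
      have : p i * log (q i) ≤ p i * log (p i) + (q i - p i) := by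
        linarith [mul_le_mul_of_nonneg_left hlog h.le]
      simp only [logb, ← mul_div_assoc, ← add_div]
      exact div_le_div_of_nonneg_right this hlogb.le
  calc ∑ i, p i * logb b (q i)
      ≤ ∑ i, (p i * logb b (p i) + (q i - p i) / log b) := sum_le_sum fun i _ => key i
    _ = ∑ i, p i * logb b (p i) + (∑ i, q i - ∑ i, p i) / log b := by
      rw [sum_add_distrib, ← sum_div, sum_sub_distrib]
    _ ≤ ∑ i, p i * logb b (p i) :=
      add_le_of_nonpos_right (div_nonpos_of_nonpos_of_nonneg (by linarith) hlogb.le)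

lemma prod_range_div_eq_of_imp {G₀ : Type*} [CommGroupWithZero G₀] {f : ℕ → G₀} (h0 : f 0 = 1)
    (hf : ∀ k, f k = 0 → f (k + 1) = 0) (k : ℕ) : ∏ i ∈ range k, f (i + 1) / f i = f k := by
  induction k with
  | zero => simp [h0]
  | succ k ih =>
    rw [prod_range_succ, ih]
    rcases eq_or_ne (f k) 0 with h | h
    · simp [h, hf k h]
    · exact mul_div_cancel₀ _ h

lemma div_mul_div_cancel_of_imp {G₀ : Type*} [GroupWithZero G₀] {a b c : G₀} (h : b = 0 → a = 0) :
    a / b * (b / c) = a / c := by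
  rcases eq_or_ne b 0 with hb | hb
  · simp [hb, h hb]
  · exact div_mul_div_cancel₀ hb

section CausalKernel

variable {γ : Type*} [Fintype γ]

def IsCausalSubstochastic {n : ℕ} (K : Fin n → (Fin n → γ) → ℝ) : Prop :=
  (∀ i z, 0 ≤ K i z) ∧
  (∀ i z z', (∀ j, j ≤ i → z j = z' j) → K i z = K i z') ∧
  (∀ i z, ∑ a, K i (update z i a) ≤ 1)

theorem IsCausalSubstochastic.sum_prod_le_one :
    ∀ {n : ℕ} {K : Fin n → (Fin n → γ) → ℝ}, IsCausalSubstochastic K → ∑ z, ∏ i, K i z ≤ 1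
  | 0, _, _ => by simp
  | n + 1, K, ⟨hK0, hKc, hK1⟩ => by
    rcases isEmpty_or_nonempty γ with hγ | ⟨⟨c⟩⟩
    · simp
    set K' : Fin n → (Fin n → γ) → ℝ := fun j z => K j.castSucc (Fin.snoc z c)
    have hcast : ∀ {j : Fin n} {j' : Fin (n + 1)}, j' ≤ j.castSucc →
        ∃ j'' : Fin n, j''.castSucc = j' ∧ j'' ≤ j := fun {j j'} hj' =>
      ⟨j'.castLT (hj'.trans_lt j.castSucc_lt_last), Fin.ext rfl, hj'⟩
    have hsnoc : ∀ j z a, K j.castSucc (Fin.snoc z a) = K' j z := fun j z a =>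
      hKc _ _ _ fun j' hj' => by
        obtain ⟨j'', rfl, -⟩ := hcast hj'
        simp
    have hK' : IsCausalSubstochastic K' := by
      refine ⟨fun j z => hK0 _ _, fun j z z' h => hKc _ _ _ fun j' hj' => ?_, fun j z => ?_⟩
      · obtain ⟨j'', rfl, hj''⟩ := hcast hj'
        simpa using h j'' hj''
      · simpa only [K', Fin.snoc_update] using hK1 j.castSucc (Fin.snoc z c)
    calc ∑ z, ∏ i, K i z
        = ∑ z : Fin n → γ, (∏ j, K' j z) * ∑ a, K (Fin.last n) (Fin.snoc z a) := by
          rw [← (Fin.snocEquiv fun _ => γ).sum_comp, Fintype.sum_prod_type, sum_comm]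
          refine sum_congr rfl fun z _ => ?_
          rw [mul_sum]
          refine sum_congr rfl fun a _ => ?_
          change ∏ i, K i (Fin.snoc z a) = _
          simp only [Fin.prod_univ_castSucc, hsnoc]
      _ ≤ ∑ z : Fin n → γ, ∏ j, K' j z := by
          refine sum_le_sum fun z _ => mul_le_of_le_one_right (prod_nonneg fun j _ => hK0 _ _) ?_
          simpa only [Fin.update_snoc_last] using hK1 (Fin.last n) (Fin.snoc z c)
      _ ≤ 1 := hK'.sum_prod_le_one

end CausalKernel

section CausalConditioning

variable {𝒳 𝒴 : Type} [Fintype 𝒳] [Fintype 𝒴] {n : ℕ} (p : (Fin n → 𝒳) → (Fin n → 𝒴) → ℝ)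

lemma pr_nonneg (hp : ∀ x y, 0 ≤ p x y) (E : (Fin n → 𝒳) → (Fin n → 𝒴) → Prop) :
    0 ≤ pr p E :=
  sum_nonneg fun x _ => sum_nonneg fun y _ => by split_ifs <;> simp [hp]

lemma pr_mono (hp : ∀ x y, 0 ≤ p x y) {E F : (Fin n → 𝒳) → (Fin n → 𝒴) → Prop}
    (h : ∀ x y, E x y → F x y) : pr p E ≤ pr p F :=
  sum_le_sum fun x _ => sum_le_sum fun y _ => by
    by_cases hE : E x y
    · simp [hE, h x y hE]
    · split_ifs <;> simp [hp]

lemma sum_pr_and_eq {γ : Type*} [Fintype γ] (E : (Fin n → 𝒳) → (Fin n → 𝒴) → Prop)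
    (f : (Fin n → 𝒳) → (Fin n → 𝒴) → γ) :
    ∑ c, pr p (fun x y => E x y ∧ f x y = c) = pr p E := by
  simp only [pr]
  rw [sum_comm]
  refine sum_congr rfl fun x _ => ?_
  rw [sum_comm]
  refine sum_congr rfl fun y _ => ?_
  by_cases hE : E x y <;> simp [hE]

/-- `prefixPr p k x y = p(x^k, y^k)`. -/
def prefixPr (k : ℕ) (x : Fin n → 𝒳) (y : Fin n → 𝒴) : ℝ :=
  pr p fun x' y' => (∀ j : Fin n, (j : ℕ) < k → x' j = x j) ∧ ∀ j : Fin n, (j : ℕ) < k → y' j = y j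

lemma prefixPr_zero (hp : ∑ x, ∑ y, p x y = 1) (x : Fin n → 𝒳) (y : Fin n → 𝒴) :
    prefixPr p 0 x y = 1 := by
  simp [prefixPr, pr, hp]

lemma prefixPr_self (x : Fin n → 𝒳) (y : Fin n → 𝒴) : prefixPr p n x y = p x y := by
  simp [prefixPr, pr, ← funext_iff, ite_and]

/-- `mixedPr p k x y = p(x^k, y^{k+1})`. -/
def mixedPr (k : ℕ) (x : Fin n → 𝒳) (y : Fin n → 𝒴) : ℝ :=
  pr p fun x' y' => (∀ j : Fin n, (j : ℕ) < k → x' j = x j) ∧ ∀ j : Fin n, (j : ℕ) ≤ k → y' j = y j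

lemma condX_zero_eq_div (i : Fin n) (x : Fin n → 𝒳) (y : Fin n → 𝒴) :
    condX p 0 i x y = prefixPr p (i + 1) x y / mixedPr p i x y := by
  unfold condX prefixPr mixedPr
  congr 2
  ext x' y'
  simp only [Nat.lt_succ_iff, Fin.lt_def, add_zero, le_iff_lt_or_eq, or_imp, forall_and,
    Fin.val_inj, forall_eq]
  tauto

lemma condY_one_eq_div (i : Fin n) (x : Fin n → 𝒳) (y : Fin n → 𝒴) :
    condY p 1 i x y = mixedPr p i x y / prefixPr p i x y := by
  unfold condY prefixPr mixedPr
  congr 2 <;> ext x' y'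
  · simp only [Nat.add_one_le_iff, Fin.lt_def]
    simp only [le_iff_lt_or_eq, or_imp, forall_and, Fin.val_inj, forall_eq]
    tauto
  · simp only [Nat.add_one_le_iff, Fin.lt_def]
    tauto

lemma prefixPr_succ_le_mixedPr (hp : ∀ x y, 0 ≤ p x y) (k : ℕ) (x : Fin n → 𝒳) (y : Fin n → 𝒴) :
    prefixPr p (k + 1) x y ≤ mixedPr p k x y :=
  pr_mono p hp fun _ _ h => ⟨fun j hj => h.1 j (by omega), fun j hj => h.2 j (by omega)⟩

lemma mixedPr_le_prefixPr (hp : ∀ x y, 0 ≤ p x y) (k : ℕ) (x : Fin n → 𝒳) (y : Fin n → 𝒴) :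
    mixedPr p k x y ≤ prefixPr p k x y :=
  pr_mono p hp fun _ _ h => ⟨h.1, fun j hj => h.2 j hj.le⟩

lemma prefixPr_congr {k : ℕ} {x x' : Fin n → 𝒳} {y y' : Fin n → 𝒴}
    (hx : ∀ j : Fin n, (j : ℕ) < k → x j = x' j) (hy : ∀ j : Fin n, (j : ℕ) < k → y j = y' j) :
    prefixPr p k x y = prefixPr p k x' y' :=
  congrArg (pr p) <| by
    ext x'' y''
    exact and_congr (forall₂_congr fun j hj => by rw [hx j hj])
      (forall₂_congr fun j hj => by rw [hy j hj])

lemma mixedPr_congr {k : ℕ} {x x' : Fin n → 𝒳} {y y' : Fin n → 𝒴}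
    (hx : ∀ j : Fin n, (j : ℕ) < k → x j = x' j) (hy : ∀ j : Fin n, (j : ℕ) ≤ k → y j = y' j) :
    mixedPr p k x y = mixedPr p k x' y' :=
  congrArg (pr p) <| by
    ext x'' y''
    exact and_congr (forall₂_congr fun j hj => by rw [hx j hj])
      (forall₂_congr fun j hj => by rw [hy j hj])

lemma condX_mul_condY (hp : ∀ x y, 0 ≤ p x y) (i : Fin n) (x : Fin n → 𝒳) (y : Fin n → 𝒴) :
    condX p 0 i x y * condY p 1 i x y = prefixPr p (i + 1) x y / prefixPr p i x y := by
  rw [condX_zero_eq_div, condY_one_eq_div]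
  exact div_mul_div_cancel_of_imp fun h =>
    le_antisymm (h ▸ prefixPr_succ_le_mixedPr p hp _ x y) (pr_nonneg p hp _)

theorem ccX_mul_ccY (hp : IsPmf p) (x : Fin n → 𝒳) (y : Fin n → 𝒴) :
    ccX p 0 x y * ccY p 1 x y = p x y := by
  have hstep : ∀ k, prefixPr p k x y = 0 → prefixPr p (k + 1) x y = 0 := fun k h =>
    le_antisymm
      (h ▸ (prefixPr_succ_le_mixedPr p hp.1 k x y).trans (mixedPr_le_prefixPr p hp.1 k x y))
      (pr_nonneg p hp.1 _)
  rw [ccX, ccY, ← prod_mul_distrib]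
  simp_rw [condX_mul_condY p hp.1]
  rw [Fin.prod_univ_eq_prod_range (fun k => prefixPr p (k + 1) x y / prefixPr p k x y),
    prod_range_div_eq_of_imp (prefixPr_zero p hp.2 x y) hstep, prefixPr_self]

lemma condY_nonneg (hp : ∀ x y, 0 ≤ p x y) (d : ℕ) (i : Fin n) (x : Fin n → 𝒳)
    (y : Fin n → 𝒴) : 0 ≤ condY p d i x y :=
  div_nonneg (pr_nonneg p hp _) (pr_nonneg p hp _)

lemma condY_congr (i : Fin n) {x x' : Fin n → 𝒳} {y y' : Fin n → 𝒴}
    (hx : ∀ j, j < i → x j = x' j) (hy : ∀ j, j ≤ i → y j = y' j) :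
    condY p 1 i x y = condY p 1 i x' y' := by
  rw [condY_one_eq_div, condY_one_eq_div, mixedPr_congr p hx fun j hj => hy j hj,
    prefixPr_congr p hx fun j hj => hy j (le_of_lt hj)]

lemma mixedPr_update (i : Fin n) (x : Fin n → 𝒳) (y : Fin n → 𝒴) (c : 𝒴) :
    mixedPr p i x (update y i c) =
      pr p fun x' y' => ((∀ j : Fin n, (j : ℕ) < i → x' j = x j) ∧
        ∀ j : Fin n, (j : ℕ) < i → y' j = y j) ∧ y' i = c := by
  unfold mixedPr
  congr 1
  ext x' y'
  simp only [le_iff_lt_or_eq, or_imp, forall_and, Fin.val_inj, forall_eq, update_self, and_assoc]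
  refine and_congr_right fun _ => and_congr_left fun _ => forall₂_congr fun j hj => ?_
  rw [update_of_ne (Fin.ne_of_val_ne hj.ne)]

lemma sum_condY_update_le_one (i : Fin n) (x : Fin n → 𝒳) (y : Fin n → 𝒴) :
    ∑ c, condY p 1 i x (update y i c) ≤ 1 := by
  have hden : ∀ c, prefixPr p i x (update y i c) = prefixPr p i x y := fun c =>
    prefixPr_congr p (fun _ _ => rfl) fun j hj => update_of_ne (Fin.ne_of_val_ne hj.ne) c y
  simp_rw [condY_one_eq_div, hden, ← sum_div, mixedPr_update, sum_pr_and_eq]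
  exact div_self_le_one _

theorem sum_prod_mul_ccY_le_one (hp : ∀ x y, 0 ≤ p x y)
    {b : Fin n → (Fin n → 𝒳) → (Fin n → 𝒴) → ℝ} (hb : IsCausalBet b) :
    ∑ x, ∑ y, (∏ i, b i x y) * ccY p 1 x y ≤ 1 := by
  obtain ⟨hb0, hbc, hb1⟩ := hb
  set K : Fin n → (Fin n → 𝒳 × 𝒴) → ℝ := fun i z =>
    b i (fun j => (z j).1) (fun j => (z j).2) * condY p 1 i (fun j => (z j).1) (fun j => (z j).2)
  have hK : IsCausalSubstochastic K := by
    refine ⟨fun i z => mul_nonneg (hb0 _ _ _) (condY_nonneg p hp 1 i _ _),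
      fun i z z' h => ?_, fun i z => ?_⟩
    · simp only [K]
      rw [hbc i _ _ _ _ (fun j hj => by rw [h j hj]) (fun j hj => by rw [h j hj]),
        condY_congr p i (fun j hj => by rw [h j hj.le]) (fun j hj => by rw [h j hj])]
    · set x : Fin n → 𝒳 := fun j => (z j).1
      set y : Fin n → 𝒴 := fun j => (z j).2
      have hfst : ∀ a : 𝒳 × 𝒴, (fun j => (update z i a j).1) = update x i a.1 := fun a => by
        ext j; rcases eq_or_ne j i with rfl | h <;> simp [*, x]
      have hsnd : ∀ a : 𝒳 × 𝒴, (fun j => (update z i a j).2) = update y i a.2 := fun a => by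
        ext j; rcases eq_or_ne j i with rfl | h <;> simp [*, y]
      have hx : ∀ a c, condY p 1 i (update x i a) (update y i c) = condY p 1 i x (update y i c) :=
        fun a c => condY_congr p i (fun j hj => update_of_ne hj.ne a x) fun _ _ => rfl
      simp only [K, hfst, hsnd, hx]
      rw [Fintype.sum_prod_type, sum_comm]
      simp only [← sum_mul, hb1, one_mul]
      exact sum_condY_update_le_one p i x y
  have := hK.sum_prod_le_one
  rw [← Fintype.sum_prod_type', ← (Equiv.arrowProdEquivProdArrow _ _ _).sum_comp]
  simpa [K, prod_mul_distrib, ccY] using this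

lemma ccX_nonneg (hp : ∀ x y, 0 ≤ p x y) (d : ℕ) (x : Fin n → 𝒳) (y : Fin n → 𝒴) :
    0 ≤ ccX p d x y :=
  prod_nonneg fun _ _ => div_nonneg (pr_nonneg p hp _) (pr_nonneg p hp _)

lemma ccY_nonneg (hp : ∀ x y, 0 ≤ p x y) (d : ℕ) (x : Fin n → 𝒳) (y : Fin n → 𝒴) :
    0 ≤ ccY p d x y :=
  prod_nonneg fun i _ => condY_nonneg p hp d i x y

lemma ccX_pos (hp : IsPmf p) {x : Fin n → 𝒳} {y : Fin n → 𝒴} (h : 0 < p x y) :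
    0 < ccX p 0 x y :=
  pos_of_mul_pos_left (ccX_mul_ccY p hp x y ▸ h) (ccY_nonneg p hp.1 1 x y)

lemma ccY_pos (hp : IsPmf p) {x : Fin n → 𝒳} {y : Fin n → 𝒴} (h : 0 < p x y) :
    0 < ccY p 1 x y :=
  pos_of_mul_pos_right (ccX_mul_ccY p hp x y ▸ h) (ccX_nonneg p hp.1 0 x y)

theorem Elogb_condX_eq_neg_HccX (hp : IsPmf p) :
    Elogb p (fun i x y => condX p 0 i x y) = -HccX p 0 := by
  have hterm : ∀ x y, p x y * logb 2 (∏ i, condX p 0 i x y) =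
      ∑ i, p x y * logb 2 (condX p 0 i x y) := by
    intro x y
    rcases (hp.1 x y).eq_or_lt with h | h
    · simp [← h]
    · rw [← mul_sum, logb_prod _ _ fun i _ =>
        prod_ne_zero_iff.1 (ccX_pos p hp h).ne' i (mem_univ i)]
  simp only [Elogb, HccX, HcondX, hterm, sum_neg_distrib, neg_neg]
  conv_rhs => rw [sum_comm]
  exact sum_congr rfl fun x _ => sum_comm

theorem Elogb_le_Elogb_condX (hp : IsPmf p) {b : Fin n → (Fin n → 𝒳) → (Fin n → 𝒴) → ℝ}
    (hb : IsCausalBet b) (hbpos : ∀ x y, 0 < p x y → 0 < ∏ i, b i x y) :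
    Elogb p b ≤ Elogb p (fun i x y => condX p 0 i x y) := by
  have hgibbs := sum_mul_logb_le_sum_mul_logb_self (ι := (Fin n → 𝒳) × (Fin n → 𝒴))
    one_lt_two (p := fun w => p w.1 w.2) (q := fun w => (∏ i, b i w.1 w.2) * ccY p 1 w.1 w.2)
    (fun w => hp.1 _ _) (by rw [Fintype.sum_prod_type]; exact hp.2)
    (fun w => mul_nonneg (prod_nonneg fun i _ => hb.1 _ _ _) (ccY_nonneg p hp.1 1 _ _))
    (by rw [Fintype.sum_prod_type]; exact sum_prod_mul_ccY_le_one p hp.1 hb)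
    (fun w h => mul_pos (hbpos _ _ h) (ccY_pos p hp h))
  simp only [Fintype.sum_prod_type] at hgibbs
  have hterm : ∀ x y, p x y * logb 2 (∏ i, b i x y) - p x y * logb 2 (ccX p 0 x y) =
      p x y * logb 2 ((∏ i, b i x y) * ccY p 1 x y) - p x y * logb 2 (p x y) := by
    intro x y
    rcases (hp.1 x y).eq_or_lt with h | h
    · simp [← h]
    have hD := (ccY_pos p hp h).ne'
    have hlogp : logb 2 (p x y) = logb 2 (ccX p 0 x y) + logb 2 (ccY p 1 x y) := by
      rw [← logb_mul (ccX_pos p hp h).ne' hD, ccX_mul_ccY p hp]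
    rw [logb_mul (hbpos x y h).ne' hD, hlogp]
    ring
  rw [← sub_nonpos]
  calc Elogb p b - Elogb p (fun i x y => condX p 0 i x y)
      = ∑ x, ∑ y, (p x y * logb 2 ((∏ i, b i x y) * ccY p 1 x y) - p x y * logb 2 (p x y)) := by
        simp only [Elogb, ← sum_sub_distrib, ← hterm]
        rfl
    _ ≤ 0 := by
        simp only [sum_sub_distrib]
        exact sub_nonpos.2 hgibbs

theorem growthW_eq_Elogb_add_Elogo (hp : ∀ x y, 0 ≤ p x y) {o : Fin n → (Fin n → 𝒳) → ℝ}
    {b : Fin n → (Fin n → 𝒳) → (Fin n → 𝒴) → ℝ} (ho : ∀ i x, 0 < o i x)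
    (hb : ∀ x y, 0 < p x y → 0 < ∏ i, b i x y) :
    growthW p o b = Elogb p b + Elogo p o := by
  simp only [growthW, Elogb, Elogo, ← sum_add_distrib]
  refine sum_congr rfl fun x _ => sum_congr rfl fun y _ => ?_
  rcases (hp x y).eq_or_lt with h | h
  · simp [← h]
  · rw [prod_mul_distrib, logb_mul (hb x y h).ne' (prod_pos fun i _ => ho i x).ne', mul_add]

end CausalConditioning

theorem optimal_causal_gambling_general {n : ℕ}
    (p : (Fin n → α) → (Fin n → β) → ℝ) (hp : IsPmf p)
    (o : Fin n → (Fin n → α) → ℝ) (ho : ∀ i x, 0 < o i x) :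
    (∀ b, IsCausalBet b → (∀ x y, 0 < p x y → 0 < ∏ i, b i x y) →
        Elogb p b ≤ -HccX p 0) ∧
    Elogb p (fun i x y => condX p 0 i x y) = -HccX p 0 ∧
    (∀ b, IsCausalBet b → (∀ x y, 0 < p x y → 0 < ∏ i, b i x y) →
        growthW p o b ≤ Elogo p o - HccX p 0) ∧
    growthW p o (fun i x y => condX p 0 i x y) = Elogo p o - HccX p 0 := by
  have hopt := Elogb_condX_eq_neg_HccX p hp
  have hbound : ∀ b, IsCausalBet b → (∀ x y, 0 < p x y → 0 < ∏ i, b i x y) →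
      Elogb p b ≤ -HccX p 0 := fun b hb hbpos => hopt ▸ Elogb_le_Elogb_condX p hp hb hbpos
  refine ⟨hbound, hopt, fun b hb hbpos => ?_, ?_⟩
  · rw [growthW_eq_Elogb_add_Elogo p hp.1 ho hbpos]
    linarith [hbound b hb hbpos]
  · rw [growthW_eq_Elogb_add_Elogo p hp.1 ho fun x y h => ccX_pos p hp h, hopt]
    ring

/-- optimal causal gambling. For any causal betting strategy `b`
(with finite log-wealth on the support of `p`), `E[log b(X^n||Y^n)] ≤ −H(X^n||Y^n)`,
with equality for `b(xᵢ|x^{i-1},y^i) = p(xᵢ|x^{i-1},y^i)`; consequently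
`W(b) ≤ E[log o(X^n)] − H(X^n||Y^n)` for every such strategy, with equality — i.e.
the maximum growth `W*(X^n||Y^n) = E[log o(X^n)] − H(X^n||Y^n)` — achieved at
`b = p(·|·,·)`. -/
theorem optimal_causal_gambling {n : ℕ}
    (p : (Fin n → α) → (Fin n → β) → ℝ) (hp : IsPmf p)
    (o : Fin n → (Fin n → α) → ℝ) (ho : ∀ i x, 0 < o i x)
    (hoc : ∀ i x x', (∀ j, j ≤ i → x j = x' j) → o i x = o i x') :
    (∀ b, IsCausalBet b → (∀ x y, 0 < p x y → 0 < ∏ i, b i x y) →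
        Elogb p b ≤ -HccX p 0) ∧
    Elogb p (fun i x y => condX p 0 i x y) = -HccX p 0 ∧
    (∀ b, IsCausalBet b → (∀ x y, 0 < p x y → 0 < ∏ i, b i x y) →
        growthW p o b ≤ Elogo p o - HccX p 0) ∧
    growthW p o (fun i x y => condX p 0 i x y) = Elogo p o - HccX p 0 :=
  optimal_causal_gambling_general p hp o ho
end
end

section
/- Mismatched portfolio bound (Barron–Cover): if X is a random stock vector with pmf f on a finite set of nonnegative price-relative vectors, b_f is a log-optimal portfolio for f and b_g is a log-optimal portfolio for another pmf g, then E_f[log(b_f^T X)] − E_f[log(b_g^T X)] ≤ D(f ‖ g), the Kullback–Leibler divergence. -/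
/-!
Optimality of `b_g` for `g` along the segment towards any portfolio `b` makes the right
derivative of `λ ↦ E_g[log(((1 - λ) b_g + λ b)ᵀX)]` at `λ = 0` nonpositive: this is the
Kuhn–Tucker condition `E_g[bᵀX / b_gᵀX] ≤ 1`. With `b = b_f` and `log x ≤ x - 1`,
`E_f[log(b_fᵀX / b_gᵀX)] - D(f‖g) = E_f[log(g · b_fᵀX / (f · b_gᵀX))] ≤ E_g[b_fᵀX / b_gᵀX] - 1 ≤ 0`.
-/

open Real Finset Filter Topology

theorem HasDerivAt.nonpos_of_eventually_le_right {f : ℝ → ℝ} {f' a : ℝ} (hf : HasDerivAt f f' a)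
    (h : ∀ᶠ t in 𝓝[>] a, f t ≤ f a) : f' ≤ 0 := by
  refine le_of_tendsto ((hasDerivAt_iff_tendsto_slope.mp hf).mono_left (nhdsGT_le_nhdsNE a)) ?_
  filter_upwards [h, self_mem_nhdsWithin] with t hft (hat : a < t)
  rw [slope_def_field]
  exact div_nonpos_of_nonpos_of_nonneg (sub_nonpos.mpr hft) (sub_nonneg.mpr hat.le)

theorem sum_mul_sub_one_nonpos_of_sum_mul_log_nonpos {ι : Type*} [Fintype ι] (g r : ι → ℝ)
    (h : ∀ t ∈ Set.Ioo (0 : ℝ) 1, ∑ i, g i * log (1 + t * (r i - 1)) ≤ 0) :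
    ∑ i, g i * (r i - 1) ≤ 0 := by
  have hderiv : HasDerivAt (fun t => ∑ i, g i * log (1 + t * (r i - 1)))
      (∑ i, g i * (r i - 1)) 0 := by
    refine HasDerivAt.fun_sum fun i _ => ?_
    have hlin : HasDerivAt (fun t : ℝ => 1 + t * (r i - 1)) (r i - 1) 0 := by
      simpa using ((hasDerivAt_id (0 : ℝ)).mul_const (r i - 1)).const_add 1
    simpa using (hlin.log (by norm_num)).const_mul (g i)
  refine hderiv.nonpos_of_eventually_le_right ?_
  filter_upwards [Ioo_mem_nhdsGT (zero_lt_one' ℝ)] with t ht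
  simpa using h t ht

def IsLogOptimal {ι κ : Type*} [Fintype ι] [Fintype κ] (g : ι → ℝ) (v : ι → κ → ℝ)
    (b : κ → ℝ) : Prop :=
  b ∈ stdSimplex ℝ κ ∧
    ∀ b' ∈ stdSimplex ℝ κ, ∑ i, g i * log (b' ⬝ᵥ v i) ≤ ∑ i, g i * log (b ⬝ᵥ v i)

theorem IsLogOptimal.sum_mul_dotProduct_div_le {ι κ : Type*} [Fintype ι] [Fintype κ]
    {g : ι → ℝ} {v : ι → κ → ℝ} {b₀ : κ → ℝ} (hopt : IsLogOptimal g v b₀)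
    (hv : ∀ i k, 0 ≤ v i k) (hpos : ∀ i, g i ≠ 0 → 0 < b₀ ⬝ᵥ v i)
    {b : κ → ℝ} (hb : b ∈ stdSimplex ℝ κ) :
    ∑ i, g i * ((b ⬝ᵥ v i) / (b₀ ⬝ᵥ v i)) ≤ ∑ i, g i := by
  set r : ι → ℝ := fun i => (b ⬝ᵥ v i) / (b₀ ⬝ᵥ v i)
  suffices ∑ i, g i * (r i - 1) ≤ 0 by
    simpa [mul_sub, sum_sub_distrib] using this
  refine sum_mul_sub_one_nonpos_of_sum_mul_log_nonpos g r fun t ⟨ht0, ht1⟩ => ?_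
  have hmix : (1 - t) • b₀ + t • b ∈ stdSimplex ℝ κ :=
    convex_stdSimplex ℝ κ hopt.1 hb (by linarith) ht0.le (by ring)
  have hterm : ∀ i, g i * log (((1 - t) • b₀ + t • b) ⬝ᵥ v i) =
      g i * log (b₀ ⬝ᵥ v i) + g i * log (1 + t * (r i - 1)) := by
    intro i
    rcases eq_or_ne (g i) 0 with hg | hg
    · simp [hg]
    have hw₀ := hpos i hg
    have hr : 0 ≤ r i :=
      div_nonneg (dotProduct_nonneg_of_nonneg hb.1 (hv i)) hw₀.le
    have hfac : ((1 - t) • b₀ + t • b) ⬝ᵥ v i = (b₀ ⬝ᵥ v i) * (1 + t * (r i - 1)) := by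
      simp only [add_dotProduct, smul_dotProduct, smul_eq_mul, r]
      field_simp
      ring
    have hmid : 0 < 1 + t * (r i - 1) := by nlinarith
    rw [hfac, log_mul hw₀.ne' hmid.ne', mul_add]
  have := hopt.2 _ hmix
  simp only [hterm, sum_add_distrib] at this
  linarith

theorem mul_log_sub_mul_log_sub_mul_log_div_le {f g a c : ℝ} (hf : 0 ≤ f) (hg : 0 ≤ g)
    (hfg : g = 0 → f = 0) (ha : 0 ≤ a) (hc : 0 ≤ c) (hpos : 0 < f → 0 < a ∧ 0 < c) :
    f * log a - f * log c - f * log (f / g) ≤ g * (a / c) - f := by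
  rcases hf.eq_or_lt with rfl | hf
  · simpa using mul_nonneg hg (div_nonneg ha hc)
  have hg : 0 < g := hg.lt_of_ne' fun h => hf.ne' (hfg h)
  obtain ⟨ha, hc⟩ := hpos hf
  calc f * log a - f * log c - f * log (f / g) = f * log (g * (a / c) / f) := by
        rw [log_div (by positivity) hf.ne', log_mul hg.ne' (by positivity),
          log_div ha.ne' hc.ne', log_div hf.ne' hg.ne']
        ring
    _ ≤ f * (g * (a / c) / f - 1) := by gcongr; exact log_le_sub_one_of_pos (by positivity)
    _ = g * (a / c) - f := by field_simp

theorem sum_mul_log_sub_sum_mul_log_le {ι : Type*} [Fintype ι] {f g a c : ι → ℝ}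
    (hf : ∀ i, 0 ≤ f i) (hg : ∀ i, 0 ≤ g i) (hfg : ∀ i, g i = 0 → f i = 0)
    (ha : ∀ i, 0 ≤ a i) (hc : ∀ i, 0 ≤ c i) (hpos : ∀ i, 0 < f i → 0 < a i ∧ 0 < c i)
    (hgac : ∑ i, g i * (a i / c i) ≤ ∑ i, f i) :
    ∑ i, f i * log (a i) - ∑ i, f i * log (c i) ≤ ∑ i, f i * log (f i / g i) := by
  have := sum_le_sum fun i (_ : i ∈ univ) =>
    mul_log_sub_mul_log_sub_mul_log_div_le (hf i) (hg i) (hfg i) (ha i) (hc i) (hpos i)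
  simp only [sum_sub_distrib] at this
  linarith

theorem sum_mul_logb (b : ℝ) {ι : Type*} [Fintype ι] (p w : ι → ℝ) :
    ∑ i, p i * logb b (w i) = (∑ i, p i * log (w i)) / log b := by
  simp only [logb, mul_div_assoc', sum_div]

theorem barron_cover_mismatch_general {ι : Type} [Fintype ι] {m : ℕ}
    (v : ι → Fin m → ℝ) (hv : ∀ i k, 0 ≤ v i k)
    (f g : ι → ℝ)
    (hf : (∀ i, 0 ≤ f i) ∧ ∑ i, f i = 1)
    (hg : (∀ i, 0 ≤ g i) ∧ ∑ i, g i = 1)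
    (habs : ∀ i, g i = 0 → f i = 0)
    (bf bg : Fin m → ℝ)
    (hbf : (∀ k, 0 ≤ bf k) ∧ ∑ k, bf k = 1)
    (hbg : (∀ k, 0 ≤ bg k) ∧ ∑ k, bg k = 1)
    (hbg_opt : ∀ b : Fin m → ℝ, (∀ k, 0 ≤ b k) → ∑ k, b k = 1 →
      ∑ i, g i * Real.logb 2 (∑ k, b k * v i k) ≤
        ∑ i, g i * Real.logb 2 (∑ k, bg k * v i k))
    (hpos : ∀ i, 0 < f i ∨ 0 < g i →
      0 < ∑ k, bf k * v i k ∧ 0 < ∑ k, bg k * v i k) :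
    ∑ i, f i * Real.logb 2 (∑ k, bf k * v i k) -
      ∑ i, f i * Real.logb 2 (∑ k, bg k * v i k) ≤
    ∑ i, f i * Real.logb 2 (f i / g i) := by
  have hlog2 : 0 < log 2 := log_pos one_lt_two
  have hopt : IsLogOptimal g v bg := ⟨hbg, fun b hb => by
    have h := hbg_opt b hb.1 hb.2
    rwa [sum_mul_logb, sum_mul_logb, div_le_div_iff_of_pos_right hlog2] at h⟩
  have hkuhnTucker : ∑ i, g i * ((bf ⬝ᵥ v i) / (bg ⬝ᵥ v i)) ≤ ∑ i, f i :=
    (hopt.sum_mul_dotProduct_div_le hv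
      (fun i hi => (hpos i (Or.inr ((hg.1 i).lt_of_ne' hi))).2) hbf).trans_eq
      (hg.2.trans hf.2.symm)
  simp only [sum_mul_logb, ← sub_div, div_le_div_iff_of_pos_right hlog2]
  exact sum_mul_log_sub_sum_mul_log_le hf.1 hg.1 habs
    (fun i => dotProduct_nonneg_of_nonneg hbf.1 (hv i))
    (fun i => dotProduct_nonneg_of_nonneg hbg.1 (hv i)) (fun i hi => hpos i (Or.inl hi))
    hkuhnTucker

/-- mismatched portfolio bound (Barron–Cover). If the stock vector `X`
takes the value `v i ∈ ℝ^m` (nonnegative price relatives) with probability `f i`,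
`bf` is a log-optimal portfolio for `f` and `bg` is a log-optimal portfolio for
another pmf `g`, `f` is absolutely continuous w.r.t. `g`, and the relevant
expected logarithms are finite (the wealth relatives are positive on the supports),
then `E_f[log(bfᵀX)] − E_f[log(bgᵀX)] ≤ D(f‖g)`. -/
theorem barron_cover_mismatch {ι : Type} [Fintype ι] {m : ℕ}
    (v : ι → Fin m → ℝ) (hv : ∀ i k, 0 ≤ v i k)
    (f g : ι → ℝ)
    (hf : (∀ i, 0 ≤ f i) ∧ ∑ i, f i = 1)
    (hg : (∀ i, 0 ≤ g i) ∧ ∑ i, g i = 1)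
    (habs : ∀ i, g i = 0 → f i = 0)
    (bf bg : Fin m → ℝ)
    (hbf : (∀ k, 0 ≤ bf k) ∧ ∑ k, bf k = 1)
    (hbg : (∀ k, 0 ≤ bg k) ∧ ∑ k, bg k = 1)
    (hbf_opt : ∀ b : Fin m → ℝ, (∀ k, 0 ≤ b k) → ∑ k, b k = 1 →
      ∑ i, f i * Real.logb 2 (∑ k, b k * v i k) ≤
        ∑ i, f i * Real.logb 2 (∑ k, bf k * v i k))
    (hbg_opt : ∀ b : Fin m → ℝ, (∀ k, 0 ≤ b k) → ∑ k, b k = 1 →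
      ∑ i, g i * Real.logb 2 (∑ k, b k * v i k) ≤
        ∑ i, g i * Real.logb 2 (∑ k, bg k * v i k))
    (hpos : ∀ i, 0 < f i ∨ 0 < g i →
      0 < ∑ k, bf k * v i k ∧ 0 < ∑ k, bg k * v i k) :
    ∑ i, f i * Real.logb 2 (∑ k, bf k * v i k) -
      ∑ i, f i * Real.logb 2 (∑ k, bg k * v i k) ≤
    ∑ i, f i * Real.logb 2 (f i / g i) :=
  barron_cover_mismatch_general v hv f g hf hg habs bf bg hbf hbg hbg_opt hpos
end

section
/- Any instantaneous lossless source encoder with causal side information has expected codeword length satisfying (1/n) E[L(X^n||Y^n)] ≥ (1/n) Σ_{i=1}^n H(X_i | X^{i-1}, Y^i) for all n, where entropy is in bits. -/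
open scoped Classical
open Real

noncomputable section

variable {α β : Type} [Fintype α] [DecidableEq α] [Fintype β] [DecidableEq β]

/-- An instantaneous lossless source encoder with causal side information:
`M i x y` is the binary codeword emitted at time `i`; it depends only on
`(x^i, y^i)`, and for every fixed history `(x^{i-1}, y^i)` the map
`x_i ↦ M i (x^{i-1} x_i) y` is prefix-free (in particular injective). -/
def IsCausalEncoder {n : ℕ}
    (M : Fin n → (Fin n → α) → (Fin n → β) → List Bool) : Prop :=
  (∀ i x x' y y', (∀ j, j ≤ i → x j = x' j) → (∀ j, j ≤ i → y j = y' j) →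
    M i x y = M i x' y') ∧
  (∀ i x x' y, (∀ j, j < i → x j = x' j) → x i ≠ x' i →
    ¬ (M i x y <+: M i x' y))

/-- `L(x^n||y^n)`: total length of the concatenation `M₁(x₁,y₁) ⋯ Mₙ(xⁿ,yⁿ)`. -/
def codeLen {n : ℕ} (M : Fin n → (Fin n → α) → (Fin n → β) → List Bool)
    (x : Fin n → α) (y : Fin n → β) : ℝ :=
  ∑ i, ((M i x y).length : ℝ)

/-! Fix a time `i` and call `(x^{i-1}, y^i)` the context. Within a context the codeword
`M_i` and the symbol `x_i` determine each other, so `H(X_i | X^{i-1}, Y^i)` is the conditional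
entropy of the codeword given the context. The codewords available in one context form a
prefix-free set, so by Kraft's inequality `∑ 2^{-ℓ} ≤ 1` there; Gibbs' inequality
(`log t ≤ t - 1`) turns this into `H(M_i | context) ≤ E[ℓ(M_i)]`. Summing over `i` gives the
claim. -/

open Finset

namespace InformationTheory

theorem uniquelyDecodable_of_prefix_free {γ : Type*} {S : Set (List γ)} (hε : [] ∉ S)
    (hS : ∀ u ∈ S, ∀ v ∈ S, u <+: v → u = v) : UniquelyDecodable S := by
  intro L₁ L₂ h₁ h₂ hflat
  induction L₁ generalizing L₂ with
  | nil =>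
    cases L₂ with
    | nil => rfl
    | cons v L₂ =>
      obtain ⟨rfl, -⟩ := List.append_eq_nil_iff.1 hflat.symm
      exact absurd (h₂ [] List.mem_cons_self) hε
  | cons u L₁ ih =>
    cases L₂ with
    | nil =>
      obtain ⟨rfl, -⟩ := List.append_eq_nil_iff.1 hflat
      exact absurd (h₁ [] List.mem_cons_self) hε
    | cons v L₂ =>
      rw [List.flatten_cons, List.flatten_cons] at hflat
      have hu := h₁ u List.mem_cons_self
      have hv := h₂ v List.mem_cons_self
      obtain rfl : u = v := by
        rcases List.prefix_or_prefix_of_prefix (List.prefix_append u _)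
            (hflat ▸ List.prefix_append v _) with h | h
        · exact hS u hu v hv h
        · exact (hS v hv u hu h).symm
      rw [ih L₂ (fun w hw => h₁ w (List.mem_cons_of_mem _ hw))
        (fun w hw => h₂ w (List.mem_cons_of_mem _ hw)) (List.append_cancel_left hflat)]

theorem kraft_inequality_of_prefix_free {γ : Type*} [Fintype γ] [Nonempty γ]
    {S : Finset (List γ)} (hS : ∀ u ∈ S, ∀ v ∈ S, u <+: v → u = v) :
    ∑ w ∈ S, (1 / Fintype.card γ : ℝ) ^ w.length ≤ 1 := by
  by_cases hε : [] ∈ S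
  · obtain rfl : S = {[]} := eq_singleton_iff_unique_mem.2
      ⟨hε, fun v hv => (hS [] hε v hv List.nil_prefix).symm⟩
    simp
  · exact kraft_mcmillan_inequality (uniquelyDecodable_of_prefix_free hε hS)

theorem sum_mul_div_sum_fiber_le {ι κ : Type*} [DecidableEq κ] (s : Finset ι) (p : ι → ℝ)
    (g : ι → κ) {F : κ → ℝ} (hF : ∀ k, 0 ≤ F k) :
    ∑ i ∈ s, p i * F (g i) / ∑ j ∈ s with g j = g i, p j ≤ ∑ k ∈ s.image g, F k := by
  rw [← sum_fiberwise_of_maps_to fun i hi => mem_image_of_mem g hi]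
  refine sum_le_sum fun k _ => ?_
  calc ∑ i ∈ s with g i = k, p i * F (g i) / ∑ j ∈ s with g j = g i, p j
      = F k * ((∑ i ∈ s with g i = k, p i) / ∑ j ∈ s with g j = k, p j) := by
        rw [sum_div, mul_sum]
        refine sum_congr rfl fun i hi => ?_
        rw [(mem_filter.1 hi).2]
        ring
    _ ≤ F k * 1 := mul_le_mul_of_nonneg_left (div_self_le_one _) (hF k)
    _ = F k := mul_one _

theorem sum_mul_half_pow_div_sum_fiber_le_one {ι : Type*} (s : Finset ι) (p : ι → ℝ)
    (W : ι → List Bool) (hW : ∀ ω ∈ s, ∀ ω' ∈ s, W ω <+: W ω' → W ω = W ω') :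
    ∑ ω ∈ s, p ω * (1 / 2 : ℝ) ^ (W ω).length / ∑ ω' ∈ s with W ω' = W ω, p ω' ≤ 1 := by
  refine (sum_mul_div_sum_fiber_le s p W (F := fun u => (1 / 2 : ℝ) ^ u.length)
    fun u => by positivity).trans ?_
  simpa using kraft_inequality_of_prefix_free (γ := Bool) (S := s.image W) (by
    simp only [mem_image]
    rintro _ ⟨ω, hω, rfl⟩ _ ⟨ω', hω', rfl⟩
    exact hW ω hω ω' hω')

theorem sum_mul_log_le_sum_mul_sub_sum {ι : Type*} {s : Finset ι} {p r : ι → ℝ}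
    (hp : ∀ i ∈ s, 0 ≤ p i) (hr : ∀ i ∈ s, 0 < p i → 0 < r i) :
    ∑ i ∈ s, p i * Real.log (r i) ≤ ∑ i ∈ s, p i * r i - ∑ i ∈ s, p i := by
  rw [← sum_sub_distrib]
  refine sum_le_sum fun i hi => ?_
  rcases (hp i hi).eq_or_lt with h0 | hpos
  · simp [← h0]
  · calc p i * Real.log (r i) ≤ p i * (r i - 1) :=
          mul_le_mul_of_nonneg_left (Real.log_le_sub_one_of_pos (hr i hi hpos)) hpos.le
      _ = p i * r i - p i := by ring

section Context

variable {Ω κ μ : Type*} [Fintype Ω] [DecidableEq κ] [DecidableEq μ]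

def fiberMass (p : Ω → ℝ) (g : Ω → κ) (ω : Ω) : ℝ := ∑ ω' ∈ univ with g ω' = g ω, p ω'

def condProb (p : Ω → ℝ) (C : Ω → κ) (W : Ω → μ) (ω : Ω) : ℝ :=
  fiberMass p (fun ω => (C ω, W ω)) ω / fiberMass p C ω

theorem le_fiberMass {p : Ω → ℝ} (hp : ∀ ω, 0 ≤ p ω) (g : Ω → κ) (ω : Ω) :
    p ω ≤ fiberMass p g ω :=
  single_le_sum (fun ω' _ => hp ω') (mem_filter.2 ⟨mem_univ ω, rfl⟩)

theorem condProb_pos {p : Ω → ℝ} (hp : ∀ ω, 0 ≤ p ω) (C : Ω → κ) (W : Ω → μ)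
    {ω : Ω} (hω : 0 < p ω) : 0 < condProb p C W ω :=
  div_pos (hω.trans_le (le_fiberMass hp _ ω)) (hω.trans_le (le_fiberMass hp C ω))

theorem sum_mul_half_pow_div_condProb_le {p : Ω → ℝ} (hp : ∀ ω, 0 ≤ p ω) (C : Ω → κ)
    (W : Ω → List Bool) (hW : ∀ ω ω', C ω = C ω' → W ω <+: W ω' → W ω = W ω') :
    ∑ ω, p ω * ((1 / 2 : ℝ) ^ (W ω).length / condProb p C W ω) ≤ ∑ ω, p ω := by
  have hC : ∀ ω ∈ univ, C ω ∈ univ.image C := fun ω _ => mem_image_of_mem C (mem_univ ω)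
  rw [← sum_fiberwise_of_maps_to hC, ← sum_fiberwise_of_maps_to hC p]
  refine sum_le_sum fun c _ => ?_
  have hfiber : ∀ ω ∈ univ.filter (C · = c),
      p ω * ((1 / 2 : ℝ) ^ (W ω).length / condProb p C W ω) =
      (∑ ω' ∈ univ with C ω' = c, p ω') *
        (p ω * (1 / 2 : ℝ) ^ (W ω).length / ∑ ω' ∈ {ω' | C ω' = c} with W ω' = W ω, p ω') := by
    intro ω hω
    have hc : C ω = c := (mem_filter.1 hω).2
    rw [condProb, fiberMass, fiberMass, div_div_eq_mul_div, filter_filter, hc]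
    simp only [Prod.mk.injEq]
    ring
  rw [sum_congr rfl hfiber, ← mul_sum]
  refine mul_le_of_le_one_right (sum_nonneg fun ω _ => hp ω) ?_
  refine sum_mul_half_pow_div_sum_fiber_le_one _ p W ?_
  simp only [mem_filter, mem_univ, true_and]
  exact fun ω hω ω' hω' => hW ω ω' (hω.trans hω'.symm)

theorem sum_mul_neg_logb_condProb_le {p : Ω → ℝ} (hp : ∀ ω, 0 ≤ p ω) (C : Ω → κ)
    (W : Ω → List Bool) (hW : ∀ ω ω', C ω = C ω' → W ω <+: W ω' → W ω = W ω') :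
    ∑ ω, p ω * -Real.logb 2 (condProb p C W ω) ≤ ∑ ω, p ω * (W ω).length := by
  set r : Ω → ℝ := fun ω => (1 / 2 : ℝ) ^ (W ω).length / condProb p C W ω
  have hgibbs := sum_mul_log_le_sum_mul_sub_sum (s := univ) (r := r) (fun ω _ => hp ω)
    fun ω _ hω => div_pos (by positivity) (condProb_pos hp C W hω)
  have hkraft := sum_mul_half_pow_div_condProb_le hp C W hW
  have hlog : ∀ ω, p ω * -Real.logb 2 (condProb p C W ω) - p ω * (W ω).length =
      p ω * Real.log (r ω) / Real.log 2 := by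
    intro ω
    rcases (hp ω).eq_or_lt with h0 | hpos
    · simp [← h0]
    · rw [Real.log_div (by positivity) (condProb_pos hp C W hpos).ne', Real.log_pow,
        one_div, Real.log_inv, Real.logb]
      field_simp
      ring
  have hsum : ∑ ω, (p ω * -Real.logb 2 (condProb p C W ω) - p ω * (W ω).length) ≤ 0 := by
    simp_rw [hlog, ← sum_div]
    exact div_nonpos_of_nonpos_of_nonneg (by linarith) (Real.log_nonneg one_le_two)
  rw [sum_sub_distrib] at hsum
  linarith

end Context

end InformationTheory

set_option linter.unusedSectionVars false

open InformationTheory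

section CausalEncoder

variable {n : ℕ}

def causalContext {γ δ : Type*} (i : Fin n) (x : Fin n → γ) (y : Fin n → δ) :
    ({j // j < i} → γ) × ({j // j ≤ i} → δ) :=
  (fun j => x j, fun j => y j)

theorem causalContext_eq_iff {γ δ : Type*} {i : Fin n} {x x' : Fin n → γ}
    {y y' : Fin n → δ} :
    causalContext i x y = causalContext i x' y' ↔
      (∀ j, j < i → x j = x' j) ∧ ∀ j, j ≤ i → y j = y' j := by
  simp [causalContext, funext_iff]

theorem pr_eq_sum_filter (p : (Fin n → α) → (Fin n → β) → ℝ)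
    (E : (Fin n → α) → (Fin n → β) → Prop) :
    pr p E = ∑ ω ∈ (univ : Finset ((Fin n → α) × (Fin n → β))) with E ω.1 ω.2, p ω.1 ω.2 := by
  rw [pr, sum_filter, ← Fintype.sum_prod_type']

namespace IsCausalEncoder

variable {M : Fin n → (Fin n → α) → (Fin n → β) → List Bool}
  {i : Fin n} {x x' : Fin n → α} {y y' : Fin n → β}

theorem eq_of_causalContext_eq (hM : IsCausalEncoder M)
    (hc : causalContext i x y = causalContext i x' y') (hi : x i = x' i) :
    M i x y = M i x' y' := by
  rw [causalContext_eq_iff] at hc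
  refine hM.1 i x x' y y' (fun j hj => ?_) hc.2
  rcases hj.lt_or_eq with hj | rfl
  exacts [hc.1 j hj, hi]

theorem eq_at_of_prefix (hM : IsCausalEncoder M)
    (hc : causalContext i x y = causalContext i x' y') (h : M i x y <+: M i x' y') :
    x i = x' i := by
  by_contra hi
  have hy : M i x' y' = M i x' y :=
    hM.1 i x' x' y' y (fun _ _ => rfl) fun j hj => ((causalContext_eq_iff.1 hc).2 j hj).symm
  exact hM.2 i x x' y (causalContext_eq_iff.1 hc).1 hi (hy ▸ h)

theorem eq_of_prefix (hM : IsCausalEncoder M)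
    (hc : causalContext i x y = causalContext i x' y') (h : M i x y <+: M i x' y') :
    M i x y = M i x' y' :=
  hM.eq_of_causalContext_eq hc (hM.eq_at_of_prefix hc h)

end IsCausalEncoder

theorem condX_zero_eq_condProb {M : Fin n → (Fin n → α) → (Fin n → β) → List Bool}
    (hM : IsCausalEncoder M) (p : (Fin n → α) → (Fin n → β) → ℝ) (i : Fin n)
    (x : Fin n → α) (y : Fin n → β) :
    condX p 0 i x y = condProb (fun ω => p ω.1 ω.2) (fun ω => causalContext i ω.1 ω.2)
      (fun ω => M i ω.1 ω.2) (x, y) := by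
  rw [condX, condProb, fiberMass, fiberMass, pr_eq_sum_filter, pr_eq_sum_filter]
  have hctx : ∀ ω : (Fin n → α) × (Fin n → β),
      causalContext i ω.1 ω.2 = causalContext i x y ↔
        (∀ j < i, ω.1 j = x j) ∧ ∀ j : Fin n, (j : ℕ) + 0 ≤ i → ω.2 j = y j := by
    simp only [causalContext_eq_iff, add_zero, Fin.val_fin_le, implies_true]
  congr 1 <;> refine sum_congr (Finset.ext fun ω => ?_) fun _ _ => rfl <;>
    simp only [mem_filter, mem_univ, true_and, Prod.mk.injEq]
  · constructor
    · rintro ⟨hx, hi, hy⟩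
      have hc := (hctx ω).2 ⟨hx, hy⟩
      exact ⟨hc, hM.eq_of_causalContext_eq hc hi⟩
    · rintro ⟨hc, hW⟩
      exact ⟨((hctx ω).1 hc).1, hM.eq_at_of_prefix hc (hW ▸ List.prefix_refl _),
        ((hctx ω).1 hc).2⟩
  · exact (hctx ω).symm

theorem HcondX_zero_le_sum_mul_length {M : Fin n → (Fin n → α) → (Fin n → β) → List Bool}
    (hM : IsCausalEncoder M) {p : (Fin n → α) → (Fin n → β) → ℝ} (hp : ∀ x y, 0 ≤ p x y)
    (i : Fin n) : HcondX p 0 i ≤ ∑ x, ∑ y, p x y * (M i x y).length := by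
  have key := sum_mul_neg_logb_condProb_le
    (p := fun ω : (Fin n → α) × (Fin n → β) => p ω.1 ω.2) (fun ω => hp ω.1 ω.2)
    (fun ω => causalContext i ω.1 ω.2) (fun ω => M i ω.1 ω.2)
    fun _ _ hc h => hM.eq_of_prefix hc h
  simp only [← condX_zero_eq_condProb hM] at key
  rw [Fintype.sum_prod_type, Fintype.sum_prod_type] at key
  simpa only [HcondX, mul_neg, sum_neg_distrib] using key

end CausalEncoder

/-- converse for instantaneous lossless compression with causal side
information: `(1/n) E[L(X^n||Y^n)] ≥ (1/n) Σᵢ H(Xᵢ | X^{i-1}, Y^i)`. -/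
theorem lossless_causal_coding_converse {n : ℕ}
    (p : (Fin n → α) → (Fin n → β) → ℝ) (hp : IsPmf p)
    (M : Fin n → (Fin n → α) → (Fin n → β) → List Bool)
    (hM : IsCausalEncoder M) :
    (n : ℝ)⁻¹ * (∑ i, HcondX p 0 i) ≤
      (n : ℝ)⁻¹ * ∑ x, ∑ y, p x y * codeLen M x y := by
  have hlen : ∑ x, ∑ y, p x y * codeLen M x y =
      ∑ i, ∑ x, ∑ y, p x y * ((M i x y).length : ℝ) := by
    simp only [codeLen, mul_sum]
    exact (sum_congr rfl fun x _ => sum_comm).trans sum_comm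
  rw [hlen]
  gcongr with i
  exact HcondX_zero_le_sum_mul_length hM hp.1 i
end
end
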